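/- Let M be a k×(k−1) blowup matrix (obtained from the initial 2×1 matrix with rows (0), (1) by a finite sequence of exterior and interior matrix blowups), and let m = (m_1, …, m_k) be any k-tuple of nonnegative integers. Let M(m) be the matrix obtained from M by appending, for each 1 ≤ s ≤ k, exactly m_s copies of the column whose first s entries (from the top) are 1 and whose remaining k−s entries are 0. Then the row-reversal of M(m) (rows read from bottom to top) is a CQS matrix. -/

import Mathlib

/-!
Call a matrix lower-CQS if every row `v` satisfies `⟨v, w⟩ = ⟨v, v⟩ - 1` for each row `w`
above it; this is the CQS condition for its row-reversal. Exterior blowups preserve it, since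
the new row is orthogonal to the old ones and has `⟨v, v⟩ = 1`. So do interior blowups: the new
column `c` satisfies `c_a c_b = c_a²` for rows `b < a`, except on the duplicated pair of rows,
which it tells apart. Every column of `M(m)` is 1 exactly on an initial segment of rows, hence
also satisfies `c_a c_b = c_a²` for `b < a`, and appending it keeps the matrix lower-CQS.
-/

/-- Standard inner product of two integer vectors given as lists. -/
def innerL (v w : List ℤ) : ℤ := (List.zipWith (· * ·) v w).sum

/-- A matrix, given as its list of rows `v_1, …, v_r` (top to bottom), is a CQS matrix if
`r ≥ 2` and `⟨v_i, v_j⟩ = ⟨v_i, v_i⟩ - 1` for all `1 ≤ i < j ≤ r`. -/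
def IsCQS (rows : List (List ℤ)) : Prop :=
  2 ≤ rows.length ∧
    ∀ i j : ℕ, i < j → j < rows.length →
      innerL (rows.getD i []) (rows.getD j []) = innerL (rows.getD i []) (rows.getD i []) - 1

/-- Append the entries of `col` to the corresponding rows, i.e. append a column. -/
def rowAppendCol (rows : List (List ℤ)) (col : List ℤ) : List (List ℤ) :=
  List.zipWith (fun r c => r ++ [c]) rows col

/-- Exterior matrix blowup: keep `M` as the top-left block; the new last row is zero except
for a `1` in its last entry. -/
def exteriorMB (M : List (List ℤ)) : List (List ℤ) :=
  M.map (fun row => row ++ [0]) ++ [List.replicate (M.length - 1) 0 ++ [1]]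

/-- Interior matrix blowup at the `i`-th term (`1 ≤ i ≤ r - 1`): insert immediately below the
`(i+1)`-st row a copy of the `(i+1)`-st row, then append a last column whose `j`-th entry is
`1` for `1 ≤ j ≤ i`, `0` for `j = i+1`, `1` for `j = i+2`, and `0` for `j > i+2`. -/
def interiorMB (M : List (List ℤ)) (i : ℕ) : List (List ℤ) :=
  rowAppendCol (M.take (i + 1) ++ [M.getD i []] ++ M.drop (i + 1))
    (List.replicate i 1 ++ [0, 1] ++ List.replicate (M.length - i - 1) 0)

/-- Blowup matrices: obtained from the initial `2 × 1` matrix with rows `(0)`, `(1)` by a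
finite sequence of exterior and interior matrix blowups. -/
inductive IsBlowupMatrix : List (List ℤ) → Prop
  | base : IsBlowupMatrix [[0], [1]]
  | exterior : ∀ M : List (List ℤ), IsBlowupMatrix M → IsBlowupMatrix (exteriorMB M)
  | interior : ∀ (M : List (List ℤ)) (i : ℕ), 1 ≤ i → i < M.length →
      IsBlowupMatrix M → IsBlowupMatrix (interiorMB M i)

/-- `extendCols M m` is the matrix `M(m)` obtained from `M` (with `k` rows) by appending,
for each `1 ≤ s ≤ k`, exactly `m_s` copies of the column whose first `s` entries (from the
top) are `1` and whose remaining entries are `0`. -/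
def extendCols (M : List (List ℤ)) (m : List ℕ) : List (List ℤ) :=
  M.mapIdx (fun i row =>
    row ++ (List.range m.length).flatMap
      (fun s => List.replicate (m.getD s 0) (if i ≤ s then (1 : ℤ) else 0)))

lemma innerL_append {v w : List ℤ} (x y : List ℤ) (h : v.length = w.length) :
    innerL (v ++ x) (w ++ y) = innerL v w + innerL x y := by
  rw [innerL, List.zipWith_append h, List.sum_append, innerL, innerL]

lemma innerL_replicate (n : ℕ) (x y : ℤ) :
    innerL (List.replicate n x) (List.replicate n y) = n * (x * y) := by
  simp [innerL, List.zipWith_replicate']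

lemma innerL_replicate_zero_left (n : ℕ) (w : List ℤ) :
    innerL (List.replicate n 0) w = 0 := by
  induction n generalizing w with
  | zero => simp [innerL]
  | succ n ih => cases w <;> simp_all [innerL, List.replicate_succ]

lemma innerL_flatMap_replicate (l : List ℕ) (k : ℕ → ℕ) (f g : ℕ → ℤ) :
    innerL (l.flatMap fun s => List.replicate (k s) (f s))
      (l.flatMap fun s => List.replicate (k s) (g s)) = (l.map fun s => k s * (f s * g s)).sum := by
  induction l with
  | nil => simp [innerL]
  | cons s l ih =>
    rw [List.flatMap_cons, List.flatMap_cons, innerL_append _ _ (by simp), ih,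
      innerL_replicate, List.map_cons, List.sum_cons]

lemma innerL_flatMap_replicate_indicator (l : List ℕ) (k : ℕ → ℕ) {a b : ℕ} (hba : b ≤ a) :
    innerL (l.flatMap fun s => List.replicate (k s) (if a ≤ s then (1 : ℤ) else 0))
        (l.flatMap fun s => List.replicate (k s) (if b ≤ s then 1 else 0)) =
      innerL (l.flatMap fun s => List.replicate (k s) (if a ≤ s then (1 : ℤ) else 0))
        (l.flatMap fun s => List.replicate (k s) (if a ≤ s then 1 else 0)) := by
  rw [innerL_flatMap_replicate, innerL_flatMap_replicate]
  congr 1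
  refine List.map_congr_left fun s _ => ?_
  split_ifs <;> omega

lemma getD_take_append_drop {α : Type*} (l : List α) (x d : α) {p : ℕ} (hp : p ≤ l.length)
    (j : ℕ) : (l.take p ++ [x] ++ l.drop p).getD j d =
      if j < p then l.getD j d else if j = p then x else l.getD (j - 1) d := by
  simp only [List.getD_eq_getElem?_getD, List.getElem?_append, List.getElem?_take,
    List.getElem?_drop, List.length_append, List.length_take, List.length_singleton,
    Nat.min_eq_left hp]
  split_ifs <;> try omega
  · rfl
  · simp [show j - p = 0 by omega]
  · rw [show p + (j - (p + 1)) = j - 1 by omega]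

lemma getD_replicate_one_append_replicate_zero (i r j : ℕ) :
    (List.replicate i (1 : ℤ) ++ [0, 1] ++ List.replicate r 0).getD j 0 =
      if j < i ∨ j = i + 1 then 1 else 0 := by
  simp only [List.getD_eq_getElem?_getD, List.getElem?_append, List.getElem?_replicate,
    List.length_append, List.length_replicate, List.length_cons, List.length_nil]
  split_ifs <;> (try simp only [Option.getD_some, Option.getD_none]) <;> try omega
  · simp [show j - i = 1 by omega]
  · simp [show j - i = 0 by omega]

lemma getD_rowAppendCol {rows : List (List ℤ)} {col : List ℤ} {j : ℕ} (hr : j < rows.length)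
    (hc : j < col.length) :
    (rowAppendCol rows col).getD j [] = rows.getD j [] ++ [col.getD j 0] := by
  simp [rowAppendCol, List.getD_eq_getElem?_getD, hr, hc]

def IsLowerCQS (M : List (List ℤ)) : Prop :=
  ∀ a b : ℕ, b < a → a < M.length →
    innerL (M.getD a []) (M.getD b []) = innerL (M.getD a []) (M.getD a []) - 1

lemma isCQS_reverse {M : List (List ℤ)} (h2 : 2 ≤ M.length) (hM : IsLowerCQS M) :
    IsCQS M.reverse := by
  refine ⟨by simpa using h2, fun i j hij hj => ?_⟩
  rw [List.length_reverse] at hj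
  rw [List.getD_reverse i (by omega), List.getD_reverse j hj]
  exact hM _ _ (by omega) (by omega)

def HasRowLength (M : List (List ℤ)) (n : ℕ) : Prop :=
  ∀ j < M.length, (M.getD j []).length = n

section Exterior

variable {M : List (List ℤ)}

lemma length_exteriorMB : (exteriorMB M).length = M.length + 1 := by
  simp [exteriorMB]

lemma exteriorMB_getD_of_lt {j : ℕ} (hj : j < M.length) :
    (exteriorMB M).getD j [] = M.getD j [] ++ [0] := by
  simp [exteriorMB, List.getD_eq_getElem?_getD, List.getElem?_append, hj]

lemma exteriorMB_getD_length :
    (exteriorMB M).getD M.length [] = List.replicate (M.length - 1) 0 ++ [1] := by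
  simp [exteriorMB, List.getD_eq_getElem?_getD]

lemma hasRowLength_exteriorMB (hlen : HasRowLength M (M.length - 1)) (h1 : 1 ≤ M.length) :
    HasRowLength (exteriorMB M) ((exteriorMB M).length - 1) := by
  intro j hj
  rw [length_exteriorMB] at hj ⊢
  rcases Nat.lt_or_ge j M.length with hj' | hj'
  · rw [exteriorMB_getD_of_lt hj', List.length_append, hlen j hj', List.length_singleton]
    omega
  · obtain rfl : j = M.length := by omega
    rw [exteriorMB_getD_length, List.length_append, List.length_replicate, List.length_singleton]
    omega

lemma isLowerCQS_exteriorMB (hlen : HasRowLength M (M.length - 1)) (hM : IsLowerCQS M) :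
    IsLowerCQS (exteriorMB M) := by
  intro a b hba ha
  rw [length_exteriorMB] at ha
  rw [exteriorMB_getD_of_lt (by omega : b < M.length)]
  rcases Nat.lt_or_ge a M.length with ha' | ha'
  · rw [exteriorMB_getD_of_lt ha', innerL_append _ _ (by rw [hlen a ha', hlen b (by omega)]),
      innerL_append _ _ rfl, hM a b hba ha']
    simp [innerL]
  · obtain rfl : a = M.length := by omega
    rw [exteriorMB_getD_length, innerL_append _ _ (by rw [List.length_replicate, hlen b hba]),
      innerL_append _ _ rfl, innerL_replicate_zero_left, innerL_replicate_zero_left]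
    simp [innerL]

end Exterior

section Interior

variable {M : List (List ℤ)} {i : ℕ}

lemma length_interiorMB (hi : i < M.length) : (interiorMB M i).length = M.length + 1 := by
  simp [interiorMB, rowAppendCol]
  omega

lemma interiorMB_getD (hi : i < M.length) {j : ℕ} (hj : j ≤ M.length) :
    (interiorMB M i).getD j [] =
      M.getD (if j ≤ i then j else j - 1) [] ++ [if j < i ∨ j = i + 1 then 1 else 0] := by
  rw [interiorMB, getD_rowAppendCol (by simp; omega) (by simp; omega),
    getD_take_append_drop _ _ _ (by omega), getD_replicate_one_append_replicate_zero]
  congr 1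
  split_ifs <;> first | rfl | omega | (congr 1; omega)

lemma hasRowLength_interiorMB (hi : i < M.length) (hlen : HasRowLength M (M.length - 1)) :
    HasRowLength (interiorMB M i) ((interiorMB M i).length - 1) := by
  intro j hj
  rw [length_interiorMB hi] at hj ⊢
  rw [interiorMB_getD hi (by omega), List.length_append, hlen _ (by split_ifs <;> omega),
    List.length_singleton]
  omega

lemma isLowerCQS_interiorMB {n : ℕ} (hi : i < M.length) (hlen : HasRowLength M n)
    (hM : IsLowerCQS M) : IsLowerCQS (interiorMB M i) := by
  intro a b hba ha
  rw [length_interiorMB hi] at ha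
  have hσa : (if a ≤ i then a else a - 1) < M.length := by split_ifs <;> omega
  have hσb : (if b ≤ i then b else b - 1) < M.length := by split_ifs <;> omega
  rw [interiorMB_getD hi (by omega), interiorMB_getD hi (by omega),
    innerL_append _ _ (by rw [hlen _ hσa, hlen _ hσb]), innerL_append _ _ rfl]
  by_cases hdup : a = i + 1 ∧ b = i
  -- the two copies of row `i` of `M`, told apart only by the new column
  · obtain ⟨rfl, rfl⟩ := hdup
    simp [innerL]
  · rw [hM _ _ (by split_ifs <;> omega) hσa]
    split_ifs <;> first | omega | simp [innerL]

end Interior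

namespace IsBlowupMatrix

variable {M : List (List ℤ)}

lemma two_le_length (hM : IsBlowupMatrix M) : 2 ≤ M.length := by
  induction hM with
  | base => simp
  | exterior M _ ih => rw [length_exteriorMB]; omega
  | interior M i _ hi _ ih => rw [length_interiorMB hi]; omega

lemma hasRowLength (hM : IsBlowupMatrix M) : HasRowLength M (M.length - 1) := by
  induction hM with
  | base =>
    intro j hj
    obtain rfl | rfl : j = 0 ∨ j = 1 := by simp at hj; omega
    all_goals rfl
  | exterior M hM ih => exact hasRowLength_exteriorMB ih (by linarith [hM.two_le_length])
  | interior M i _ hi _ ih => exact hasRowLength_interiorMB hi ih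

lemma isLowerCQS (hM : IsBlowupMatrix M) : IsLowerCQS M := by
  induction hM with
  | base =>
    intro a b hba ha
    obtain ⟨rfl, rfl⟩ : a = 1 ∧ b = 0 := by simp at ha; omega
    rfl
  | exterior M hM ih => exact isLowerCQS_exteriorMB hM.hasRowLength ih
  | interior M i _ hi hM ih => exact isLowerCQS_interiorMB hi hM.hasRowLength ih

end IsBlowupMatrix

lemma isLowerCQS_mapIdx_append {M : List (List ℤ)} {n : ℕ} (hlen : HasRowLength M n)
    (hM : IsLowerCQS M) (T : ℕ → List ℤ)
    (hT : ∀ a b, b < a → innerL (T a) (T b) = innerL (T a) (T a)) :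
    IsLowerCQS (M.mapIdx fun i row => row ++ T i) := by
  intro a b hba ha
  rw [List.length_mapIdx] at ha
  have hrow : ∀ j < M.length, (M.mapIdx fun i row => row ++ T i).getD j [] = M.getD j [] ++ T j :=
    fun j hj => by simp [List.getD_eq_getElem?_getD, hj]
  rw [hrow a ha, hrow b (by omega), innerL_append _ _ (by rw [hlen a ha, hlen b (by omega)]),
    innerL_append _ _ rfl, hM a b hba ha, hT a b hba]
  ring

theorem extendCols_reverse_isCQS_general (M : List (List ℤ)) (hM : IsBlowupMatrix M)
    (m : List ℕ) :
    IsCQS (extendCols M m).reverse := by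
  refine isCQS_reverse (by simpa [extendCols] using hM.two_le_length) ?_
  exact isLowerCQS_mapIdx_append hM.hasRowLength hM.isLowerCQS _
    fun a b hba => innerL_flatMap_replicate_indicator _ _ hba.le

/-- If `M` is a blowup matrix with `k` rows and `m = (m_1, …, m_k)` is any `k`-tuple of
nonnegative integers, then the row-reversal of the extended matrix `M(m)` is a
CQS matrix. -/
theorem extendCols_reverse_isCQS (M : List (List ℤ)) (hM : IsBlowupMatrix M)
    (m : List ℕ) (hm : m.length = M.length) :
    IsCQS (extendCols M m).reverse :=
  extendCols_reverse_isCQS_general M hM m
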